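/- arXiv:0802.2475 — 5 statements merged into one kernel-verified Lean document; each statement's English description precedes it below -/
import Mathlib

section
/- If f(z) = ∫₀¹ dμ(t)/(1-tz) for a probability measure μ on [0,1], then for all γ ≤ 1 and 0 < y₁ ≤ y₂, Re( f(γ+iy₁)/f(γ+iy₂) ) ≥ 1. -/
/-!
Put `z_y = γ + i y` and `g_y(t) = (1 - t z_y)⁻¹`, so that `f(z_y) = ∫ g_y dμ`. Since
`Re(f(z₁)/f(z₂)) - 1 = Re((f(z₁) - f(z₂)) · conj f(z₂)) / |f(z₂)|²`, it suffices that
`f(z₂) ≠ 0` and that `Re((f(z₁) - f(z₂)) · conj f(z₂)) ≥ 0`. The latter is a double integral over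
`μ ⊗ μ` which is invariant under `(t, s) ↦ (s, t)`, so it is enough that its symmetrization is
pointwise nonnegative on `[0,1]²`. With `a = 1 - tγ ≥ 0` and `b = 1 - sγ ≥ 0` this becomes, after
clearing positive denominators, a polynomial inequality whose left side, expanded in powers of
`d = y₂ - y₁ ≥ 0`, has manifestly nonnegative coefficients. Finally `f(z₂) ≠ 0` because every
`g_{y₂}(t)` lies in the open half-plane `Re w + Im w > 0`.
-/

open MeasureTheory Complex ComplexConjugate

lemma kernel_numerator_nonneg {a b t s y d : ℝ} (ha : 0 ≤ a) (hb : 0 ≤ b) (ht : 0 ≤ t)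
    (hs : 0 ≤ s) (hy : 0 ≤ y) (hd : 0 ≤ d) :
    0 ≤ (a * b + t * s * (y * (y + d)))
        * ((b ^ 2 + s ^ 2 * y ^ 2) * (a ^ 2 + t ^ 2 * (y + d) ^ 2)
          + (a ^ 2 + t ^ 2 * y ^ 2) * (b ^ 2 + s ^ 2 * (y + d) ^ 2))
      - 2 * (a * b + t * s * (y + d) ^ 2) * ((a ^ 2 + t ^ 2 * y ^ 2) * (b ^ 2 + s ^ 2 * y ^ 2)) := by
  have expansion : (a * b + t * s * (y * (y + d)))
        * ((b ^ 2 + s ^ 2 * y ^ 2) * (a ^ 2 + t ^ 2 * (y + d) ^ 2)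
          + (a ^ 2 + t ^ 2 * y ^ 2) * (b ^ 2 + s ^ 2 * (y + d) ^ 2))
      - 2 * (a * b + t * s * (y + d) ^ 2) * ((a ^ 2 + t ^ 2 * y ^ 2) * (b ^ 2 + s ^ 2 * y ^ 2))
      = d * (2 * y * (t ^ 3 * s ^ 3 * y ^ 4 + 2 * a * b * t ^ 2 * s ^ 2 * y ^ 2
            + a * b * (b * t - a * s) ^ 2 + a ^ 2 * b ^ 2 * (t * s)))
        + d ^ 2 * (4 * t ^ 3 * s ^ 3 * y ^ 4 + 2 * a * b * t ^ 2 * s ^ 2 * y ^ 2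
            + t * s * y ^ 2 * (b ^ 2 * t ^ 2 + a ^ 2 * s ^ 2) + a * b * (b * t - a * s) ^ 2)
        + d ^ 3 * (t * s * (2 * t ^ 2 * s ^ 2 * y ^ 3 + y * (b ^ 2 * t ^ 2 + a ^ 2 * s ^ 2))) := by
    ring
  rw [expansion]
  positivity

lemma re_inv_mul_conj_inv (w v : ℂ) :
    (w⁻¹ * conj v⁻¹).re = (w.re * v.re + w.im * v.im) / (normSq w * normSq v) := by
  rw [map_inv₀, ← mul_inv, inv_re, normSq_mul, normSq_conj, mul_re, conj_re, conj_im]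
  ring

lemma re_inv_sub_mul_I_mul_conj_inv (a b c d : ℝ) :
    ((a - b * I)⁻¹ * conj (c - d * I)⁻¹).re
      = (a * c + b * d) / ((a ^ 2 + b ^ 2) * (c ^ 2 + d ^ 2)) := by
  rw [re_inv_mul_conj_inv]
  simp only [sub_re, sub_im, ofReal_re, ofReal_im, mul_re, mul_im, I_re, I_im, normSq_apply]
  ring

lemma sq_add_sq_mul_sq_pos {a t y : ℝ} (ha : 0 ≤ a) (hat : 0 < a + t) (hy : 0 < y) :
    0 < a ^ 2 + t ^ 2 * y ^ 2 := by
  rcases ha.lt_or_eq with ha | rfl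
  · positivity
  · have : 0 < t := by linarith
    positivity

lemma symmetrized_kernel_nonneg {a b t s y₁ y₂ : ℝ} (ha : 0 ≤ a) (hb : 0 ≤ b) (ht : 0 ≤ t)
    (hs : 0 ≤ s) (hat : 0 < a + t) (hbs : 0 < b + s) (hy₁ : 0 < y₁) (hy : y₁ ≤ y₂) :
    0 ≤ (((a - (t * y₁ : ℝ) * I)⁻¹ - (a - (t * y₂ : ℝ) * I)⁻¹) * conj (b - (s * y₂ : ℝ) * I)⁻¹).re
      + (((b - (s * y₁ : ℝ) * I)⁻¹ - (b - (s * y₂ : ℝ) * I)⁻¹)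
          * conj (a - (t * y₂ : ℝ) * I)⁻¹).re := by
  obtain ⟨d, hd, rfl⟩ : ∃ d, 0 ≤ d ∧ y₂ = y₁ + d := ⟨y₂ - y₁, by linarith, by ring⟩
  have hy₂ : 0 < y₁ + d := by linarith
  have h₁ := sq_add_sq_mul_sq_pos ha hat hy₁
  have h₂ := sq_add_sq_mul_sq_pos ha hat hy₂
  have h₃ := sq_add_sq_mul_sq_pos hb hbs hy₁
  have h₄ := sq_add_sq_mul_sq_pos hb hbs hy₂
  simp only [sub_mul, sub_re, re_inv_sub_mul_I_mul_conj_inv, mul_pow]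
  calc (0 : ℝ)
      ≤ ((a * b + t * s * (y₁ * (y₁ + d)))
            * ((b ^ 2 + s ^ 2 * y₁ ^ 2) * (a ^ 2 + t ^ 2 * (y₁ + d) ^ 2)
              + (a ^ 2 + t ^ 2 * y₁ ^ 2) * (b ^ 2 + s ^ 2 * (y₁ + d) ^ 2))
          - 2 * (a * b + t * s * (y₁ + d) ^ 2)
            * ((a ^ 2 + t ^ 2 * y₁ ^ 2) * (b ^ 2 + s ^ 2 * y₁ ^ 2)))
        / ((a ^ 2 + t ^ 2 * y₁ ^ 2) * (b ^ 2 + s ^ 2 * y₁ ^ 2)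
          * ((a ^ 2 + t ^ 2 * (y₁ + d) ^ 2) * (b ^ 2 + s ^ 2 * (y₁ + d) ^ 2))) :=
        div_nonneg (kernel_numerator_nonneg ha hb ht hs hy₁.le hd) (by positivity)
    _ = _ := by
      field_simp
      ring

lemma one_le_re_div_of_re_sub_mul_conj_nonneg {z w : ℂ} (hw : w ≠ 0)
    (h : 0 ≤ ((z - w) * conj w).re) : 1 ≤ (z / w).re := by
  rw [div_re, ← add_div, le_div_iff₀ (normSq_pos.2 hw), one_mul, normSq_apply]
  simp only [mul_re, sub_re, sub_im, conj_re, conj_im] at h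
  linarith

lemma re_add_im_inv_pos {w : ℂ} (hw : 0 < w.re - w.im) : 0 < (w⁻¹).re + (w⁻¹).im := by
  have hw₀ : w ≠ 0 := by rintro rfl; simp at hw
  rw [inv_re, inv_im, neg_div, ← sub_eq_add_neg, ← sub_div]
  exact div_pos hw (normSq_pos.2 hw₀)

section Integrals

variable {α : Type*} [MeasurableSpace α] {μ : Measure α}

lemma integral_pos_of_ae_pos [NeZero μ] {f : α → ℝ} (hf : Integrable f μ)
    (h : ∀ᵐ x ∂μ, 0 < f x) : 0 < ∫ x, f x ∂μ := by
  have hsupp : Function.support f =ᵐ[μ] Set.univ :=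
    ae_eq_univ.2 (mem_ae_iff.1 (h.mono fun _ hx ↦ hx.ne'))
  rw [integral_pos_iff_support_of_nonneg_ae (h.mono fun _ hx ↦ hx.le) hf, measure_congr hsupp]
  exact pos_iff_ne_zero.2 (Measure.measure_univ_ne_zero.2 (NeZero.ne μ))

lemma integral_ne_zero_of_ae_re_add_im_pos [NeZero μ] {F : α → ℂ} (hF : Integrable F μ)
    (h : ∀ᵐ x ∂μ, 0 < (F x).re + (F x).im) : ∫ x, F x ∂μ ≠ 0 := by
  have hre : Integrable (fun x ↦ (F x).re) μ := hF.re
  have him : Integrable (fun x ↦ (F x).im) μ := hF.im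
  have hpos : 0 < ∫ x, ((F x).re + (F x).im) ∂μ := integral_pos_of_ae_pos (hre.add him) h
  have e_re : ∫ x, (F x).re ∂μ = (∫ x, F x ∂μ).re := integral_re hF
  have e_im : ∫ x, (F x).im ∂μ = (∫ x, F x ∂μ).im := integral_im hF
  intro h0
  rw [integral_add hre him, e_re, e_im, h0] at hpos
  simp at hpos

lemma re_integral_mul_conj_integral_nonneg [SFinite μ] {F G : α → ℂ} {S : Set α}
    (hF : Integrable F μ) (hG : Integrable G μ) (hS : ∀ᵐ x ∂μ, x ∈ S)
    (h : ∀ x ∈ S, ∀ y ∈ S, 0 ≤ (F x * conj (G y)).re + (F y * conj (G x)).re) :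
    0 ≤ ((∫ x, F x ∂μ) * conj (∫ x, G x ∂μ)).re := by
  set K : α × α → ℝ := fun p ↦ (F p.1 * conj (G p.2)).re
  have hFG : Integrable (fun p : α × α ↦ F p.1 * conj (G p.2)) (μ.prod μ) :=
    hF.mul_prod (conjCLE.toContinuousLinearMap.integrable_comp hG)
  have hK : Integrable K (μ.prod μ) := hFG.re
  have hK' : Integrable (fun p ↦ K p.swap) (μ.prod μ) := hK.swap
  have hSS : ∀ᵐ p ∂μ.prod μ, p.1 ∈ S ∧ p.2 ∈ S :=
    (Measure.quasiMeasurePreserving_fst.ae hS).and (Measure.quasiMeasurePreserving_snd.ae hS)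
  calc 0 ≤ (∫ p, (K p + K p.swap) ∂μ.prod μ) / 2 :=
        div_nonneg (integral_nonneg_of_ae (hSS.mono fun p hp ↦ h _ hp.1 _ hp.2)) zero_le_two
    _ = ∫ p, K p ∂μ.prod μ := by rw [integral_add hK hK', integral_prod_swap]; ring
    _ = _ := by
      rw [← integral_conj, ← integral_prod_mul]
      exact integral_re hFG

lemma Continuous.integrable_of_ae_mem_compact [TopologicalSpace α] [OpensMeasurableSpace α]
    [T2Space α] [IsFiniteMeasure μ] {E : Type*} [NormedAddCommGroup E] {g : α → E} {K : Set α}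
    (hg : Continuous g) (hK : IsCompact K) (hμK : ∀ᵐ x ∂μ, x ∈ K) : Integrable g μ := by
  rw [← Measure.restrict_eq_self_of_ae_mem hμK]
  exact hg.continuousOn.integrableOn_compact hK

end Integrals

lemma one_sub_ofReal_mul_ne_zero {z : ℂ} (hz : z.im ≠ 0) (t : ℝ) : 1 - (t : ℂ) * z ≠ 0 := by
  intro h
  have him := congrArg im h
  have hre := congrArg re h
  simp only [sub_im, one_im, mul_im, ofReal_re, ofReal_im, zero_mul, add_zero, zero_sub,
    neg_eq_zero, mul_eq_zero, zero_im] at him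
  rcases him with rfl | him
  · simp at hre
  · exact hz him

lemma one_sub_ofReal_mul_eq (t γ y : ℝ) :
    1 - (t : ℂ) * (γ + y * I) = ((1 - t * γ : ℝ) : ℂ) - (t * y : ℝ) * I := by
  push_cast
  ring

lemma one_sub_mul_nonneg_of_mem_Icc {γ t : ℝ} (hγ : γ ≤ 1) (ht : t ∈ Set.Icc (0 : ℝ) 1) :
    0 ≤ 1 - t * γ := by
  nlinarith [ht.1, ht.2]

lemma re_sub_im_one_sub_mul_pos {γ y t : ℝ} (hγ : γ ≤ 1) (hy : 0 < y)
    (ht : t ∈ Set.Icc (0 : ℝ) 1) :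
    0 < (1 - (t : ℂ) * (γ + y * I)).re - (1 - (t : ℂ) * (γ + y * I)).im := by
  rw [one_sub_ofReal_mul_eq]
  simp only [sub_re, sub_im, ofReal_re, ofReal_im, mul_re, mul_im, I_re, I_im]
  nlinarith [mul_le_mul_of_nonneg_left hγ ht.1, mul_nonneg ht.1 (sq_nonneg y), ht.2]

lemma symmetrized_resolvent_kernel_nonneg {γ y₁ y₂ t s : ℝ} (hγ : γ ≤ 1) (hy₁ : 0 < y₁)
    (hy : y₁ ≤ y₂) (ht : t ∈ Set.Icc (0 : ℝ) 1) (hs : s ∈ Set.Icc (0 : ℝ) 1) :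
    0 ≤ (((1 - (t : ℂ) * (γ + y₁ * I))⁻¹ - (1 - (t : ℂ) * (γ + y₂ * I))⁻¹)
          * conj (1 - (s : ℂ) * (γ + y₂ * I))⁻¹).re
      + (((1 - (s : ℂ) * (γ + y₁ * I))⁻¹ - (1 - (s : ℂ) * (γ + y₂ * I))⁻¹)
          * conj (1 - (t : ℂ) * (γ + y₂ * I))⁻¹).re := by
  simp only [one_sub_ofReal_mul_eq]
  exact symmetrized_kernel_nonneg (one_sub_mul_nonneg_of_mem_Icc hγ ht)
    (one_sub_mul_nonneg_of_mem_Icc hγ hs) ht.1 hs.1 (by nlinarith [ht.1]) (by nlinarith [hs.1])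
    hy₁ hy

theorem stmt0 (μ : Measure ℝ) [IsProbabilityMeasure μ]
    (hμ : μ (Set.Icc (0:ℝ) 1)ᶜ = 0)
    (f : ℂ → ℂ) (hf : ∀ z : ℂ, f z = ∫ t, (1 - (t:ℂ) * z)⁻¹ ∂μ)
    (γ : ℝ) (hγ : γ ≤ 1) (y₁ y₂ : ℝ) (hy₁ : 0 < y₁) (hy : y₁ ≤ y₂) :
    1 ≤ ((f ((γ:ℂ) + y₁ * Complex.I)) / (f ((γ:ℂ) + y₂ * Complex.I))).re := by
  have hy₂ : 0 < y₂ := hy₁.trans_le hy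
  have hK : ∀ᵐ t ∂μ, t ∈ Set.Icc (0 : ℝ) 1 := mem_ae_iff.2 hμ
  have hint : ∀ y : ℝ, 0 < y → Integrable (fun t : ℝ ↦ (1 - (t : ℂ) * (γ + y * I))⁻¹) μ :=
    fun y hy ↦ ((continuous_const.sub (continuous_ofReal.mul continuous_const)).inv₀
      (one_sub_ofReal_mul_ne_zero (by simpa using hy.ne'))).integrable_of_ae_mem_compact
      isCompact_Icc hK
  rw [hf, hf]
  refine one_le_re_div_of_re_sub_mul_conj_nonneg ?_ ?_
  · exact integral_ne_zero_of_ae_re_add_im_pos (hint y₂ hy₂)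
      (hK.mono fun t ht ↦ re_add_im_inv_pos (re_sub_im_one_sub_mul_pos hγ hy₂ ht))
  · rw [← integral_sub (hint y₁ hy₁) (hint y₂ hy₂)]
    exact re_integral_mul_conj_integral_nonneg ((hint y₁ hy₁).sub (hint y₂ hy₂)) (hint y₂ hy₂) hK
      fun t ht s hs ↦ symmetrized_resolvent_kernel_nonneg hγ hy₁ hy ht hs
end

section
/- If f, g ∈ 𝒯, then Re( (f*g)(iy) / f(iy) ) ≥ 1 for all y > 0. -/
/-!
Let `φ p = (1 - p i)⁻¹` for real `p`, so that `f(iy) = ∫ φ(sy) dμ(s)`. Since all measures live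
on `[0, 1]`, where polynomials are dense (Weierstrass), moments determine them: the measure `ρ`
of `f * g` is the image of `μ ⊗ ν` under `(s, t) ↦ st`, hence `(f * g)(iy) = ∫ f(ity) dν(t)`.
It therefore suffices that `Re (f(ity) · conj f(iy)) ≥ |f(iy)|²` for every `t ∈ [0, 1]`.
Both sides are integrals over `μ ⊗ μ`, and their difference is the integral of
`K(s, u) = Re ((φ(tsy) - φ(sy)) · conj φ(uy))`. This kernel is not nonnegative, but
`K(s, u) + K(u, s)` is, and `K` and its transpose have the same integral.
-/

open MeasureTheory Complex Set ComplexConjugate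

section MomentProblem

variable {μ ν : Measure ℝ} {a b : ℝ}

lemma Continuous.integrable_of_ae_mem_Icc {E : Type*} [NormedAddCommGroup E] [IsFiniteMeasure μ]
    {g : ℝ → E} (hg : Continuous g) (hμ : ∀ᵐ x ∂μ, x ∈ Icc a b) : Integrable g μ := by
  rw [← Measure.restrict_eq_self_of_ae_mem hμ]
  exact hg.continuousOn.integrableOn_compact isCompact_Icc

lemma integral_eval_eq_sum_moments [IsFiniteMeasure μ] (hμ : ∀ᵐ x ∂μ, x ∈ Icc a b)
    (p : Polynomial ℝ) :
    ∫ x, p.eval x ∂μ = ∑ k ∈ Finset.range (p.natDegree + 1), p.coeff k * ∫ x, x ^ k ∂μ := by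
  simp_rw [Polynomial.eval_eq_sum_range, ← integral_const_mul]
  exact integral_finsetSum _ fun k _ ↦
    ((continuous_pow k).integrable_of_ae_mem_Icc hμ).const_mul _

lemma integral_eq_of_moments_eq [IsFiniteMeasure μ] [IsFiniteMeasure ν]
    (hμ : ∀ᵐ x ∂μ, x ∈ Icc a b) (hν : ∀ᵐ x ∂ν, x ∈ Icc a b)
    (hmom : ∀ k : ℕ, ∫ x, x ^ k ∂μ = ∫ x, x ^ k ∂ν) {g : ℝ → ℝ} (hg : Continuous g) :
    ∫ x, g x ∂μ = ∫ x, g x ∂ν := by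
  set m := μ.real univ + ν.real univ
  have hm : 0 ≤ m := by positivity
  refine eq_of_forall_dist_le fun δ hδ ↦ ?_
  obtain ⟨p, hp⟩ := exists_polynomial_near_of_continuousOn a b g hg.continuousOn (δ / (m + 1))
    (by positivity)
  have hpoly : ∫ x, p.eval x ∂μ = ∫ x, p.eval x ∂ν := by
    simp only [integral_eval_eq_sum_moments hμ, integral_eval_eq_sum_moments hν, hmom]
  have approx : ∀ {ρ : Measure ℝ} [IsFiniteMeasure ρ], (∀ᵐ x ∂ρ, x ∈ Icc a b) →
      ‖∫ x, g x ∂ρ - ∫ x, p.eval x ∂ρ‖ ≤ δ / (m + 1) * ρ.real univ := by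
    intro ρ _ hρ
    rw [← integral_sub (hg.integrable_of_ae_mem_Icc hρ) (p.continuous.integrable_of_ae_mem_Icc hρ)]
    refine norm_integral_le_of_norm_le_const ?_
    filter_upwards [hρ] with x hx
    rw [Real.norm_eq_abs, abs_sub_comm]
    exact (hp x hx).le
  calc dist (∫ x, g x ∂μ) (∫ x, g x ∂ν)
      ≤ ‖∫ x, g x ∂μ - ∫ x, p.eval x ∂μ‖ + ‖∫ x, g x ∂ν - ∫ x, p.eval x ∂ν‖ := by
        rw [dist_eq_norm, ← sub_sub_sub_cancel_right _ _ (∫ x, p.eval x ∂μ), hpoly]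
        exact norm_sub_le _ _
    _ ≤ δ / (m + 1) * m := by rw [mul_add]; exact add_le_add (approx hμ) (approx hν)
    _ ≤ δ := by
        rw [div_mul_eq_mul_div, div_le_iff₀ (by positivity)]
        nlinarith

lemma eq_of_moments_eq [IsFiniteMeasure μ] [IsFiniteMeasure ν]
    (hμ : ∀ᵐ x ∂μ, x ∈ Icc a b) (hν : ∀ᵐ x ∂ν, x ∈ Icc a b)
    (hmom : ∀ k : ℕ, ∫ x, x ^ k ∂μ = ∫ x, x ^ k ∂ν) : μ = ν :=
  ext_of_forall_integral_eq_of_IsFiniteMeasure fun g ↦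
    integral_eq_of_moments_eq hμ hν hmom g.continuous

end MomentProblem

section MultiplicativeConvolution

variable {μ ν : Measure ℝ}

lemma integral_pow_map_mul [IsFiniteMeasure μ] [IsFiniteMeasure ν] (k : ℕ) :
    ∫ x, x ^ k ∂(μ.prod ν).map (fun p ↦ p.1 * p.2) = (∫ s, s ^ k ∂μ) * ∫ t, t ^ k ∂ν := by
  rw [integral_map (by fun_prop) (by fun_prop)]
  simp_rw [mul_pow]
  exact integral_prod_mul _ _

lemma ae_mem_Icc_map_mul [SFinite ν] (hμ : ∀ᵐ s ∂μ, s ∈ Icc (0 : ℝ) 1)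
    (hν : ∀ᵐ t ∂ν, t ∈ Icc (0 : ℝ) 1) :
    ∀ᵐ x ∂(μ.prod ν).map (fun p ↦ p.1 * p.2), x ∈ Icc (0 : ℝ) 1 := by
  refine (ae_map_iff (by fun_prop) (measurableSet_Icc : MeasurableSet (Icc (0 : ℝ) 1))).2 ?_
  filter_upwards [Measure.quasiMeasurePreserving_fst.ae hμ,
    Measure.quasiMeasurePreserving_snd.ae hν] with p hs ht using unitInterval.mul_mem hs ht

lemma eq_map_mul_of_moments_eq_mul {ρ : Measure ℝ} [IsFiniteMeasure μ] [IsFiniteMeasure ν]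
    [IsFiniteMeasure ρ] (hμ : ∀ᵐ s ∂μ, s ∈ Icc (0 : ℝ) 1) (hν : ∀ᵐ t ∂ν, t ∈ Icc (0 : ℝ) 1)
    (hρ : ∀ᵐ x ∂ρ, x ∈ Icc (0 : ℝ) 1)
    (hmom : ∀ k : ℕ, ∫ x, x ^ k ∂ρ = (∫ s, s ^ k ∂μ) * ∫ t, t ^ k ∂ν) :
    ρ = (μ.prod ν).map (fun p ↦ p.1 * p.2) :=
  eq_of_moments_eq hρ (ae_mem_Icc_map_mul hμ hν) fun k ↦ by rw [hmom, integral_pow_map_mul]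

end MultiplicativeConvolution

lemma one_sub_ofReal_mul_I_ne_zero (p : ℝ) : 1 - (p : ℂ) * I ≠ 0 :=
  fun h ↦ by simpa using congrArg re h

lemma continuous_inv_one_sub_ofReal_mul_I : Continuous fun p : ℝ ↦ (1 - (p : ℂ) * I)⁻¹ :=
  Continuous.inv₀ (by fun_prop) one_sub_ofReal_mul_I_ne_zero

lemma norm_inv_one_sub_ofReal_mul_I_le_one (p : ℝ) : ‖(1 - (p : ℂ) * I)⁻¹‖ ≤ 1 := by
  rw [norm_inv]
  refine inv_le_one_of_one_le₀ ?_
  simpa using abs_re_le_norm (1 - (p : ℂ) * I)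

lemma re_inv_one_sub_ofReal_mul_I_pos (p : ℝ) : 0 < ((1 - (p : ℂ) * I)⁻¹).re := by
  rw [inv_re]
  exact div_pos (by simp) (normSq_pos.2 (one_sub_ofReal_mul_I_ne_zero p))

lemma inv_one_sub_ofReal_mul_I (p : ℝ) :
    (1 - (p : ℂ) * I)⁻¹ = (1 + p * I) / (1 + p ^ 2 : ℝ) := by
  have h₁ := one_sub_ofReal_mul_I_ne_zero p
  have h₂ : (1 + p ^ 2 : ℂ) ≠ 0 := by exact_mod_cast (by positivity : (1 + p ^ 2 : ℝ) ≠ 0)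
  push_cast
  field_simp
  linear_combination (p ^ 2 : ℂ) * I_sq

lemma re_inv_one_sub_ofReal_mul_I_mul_conj (p q : ℝ) :
    ((1 - (p : ℂ) * I)⁻¹ * conj (1 - (q : ℂ) * I)⁻¹).re
      = (1 + p * q) / ((1 + p ^ 2) * (1 + q ^ 2)) := by
  rw [inv_one_sub_ofReal_mul_I, inv_one_sub_ofReal_mul_I, map_div₀, conj_ofReal, div_mul_div_comm,
    ← ofReal_mul, div_ofReal_re]
  simp

lemma re_inv_one_sub_ofReal_mul_I_mul_conj_sub_add_swap_nonneg (a b t : ℝ) (ha : 0 ≤ a)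
    (hb : 0 ≤ b) (ht : t ∈ Icc (0 : ℝ) 1) :
    0 ≤ ((1 - ((t * a : ℝ) : ℂ) * I)⁻¹ * conj (1 - (b : ℂ) * I)⁻¹).re
        - ((1 - (a : ℂ) * I)⁻¹ * conj (1 - (b : ℂ) * I)⁻¹).re
      + (((1 - ((t * b : ℝ) : ℂ) * I)⁻¹ * conj (1 - (a : ℂ) * I)⁻¹).re
        - ((1 - (b : ℂ) * I)⁻¹ * conj (1 - (a : ℂ) * I)⁻¹).re) := by
  simp only [re_inv_one_sub_ofReal_mul_I_mul_conj]
  obtain ⟨ht₀, ht₁⟩ := ht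
  have hN : 0 ≤ (1 - t) * ((a - b) ^ 2 + t * (a ^ 2 + b ^ 2))
      + a * b * t * (1 - t) ^ 2 * (a ^ 2 + b ^ 2) + 2 * a ^ 2 * b ^ 2 * t ^ 2 * (1 - t) * (1 + t)
      + 2 * a ^ 3 * b ^ 3 * t ^ 3 * (1 - t) := by
    have : 0 ≤ 1 - t := by linarith
    positivity
  have hD : 0 < (1 + a ^ 2) * (1 + b ^ 2) * (1 + (t * a) ^ 2) * (1 + (t * b) ^ 2) := by positivity
  -- `hN / hD` is the left-hand side brought to a common denominator
  refine (div_nonneg hN hD.le).trans_eq ?_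
  field_simp
  ring

lemma one_le_re_div_of_normSq_le_re_mul_conj {w z : ℂ} (hz : z ≠ 0)
    (h : normSq z ≤ (w * conj z).re) : 1 ≤ (w / z).re := by
  rw [div_re, ← add_div, le_div_iff₀ (normSq_pos.2 hz), one_mul]
  simpa using h

section Integrals

variable {X Y : Type*} [MeasurableSpace X] [MeasurableSpace Y]

lemma re_integral_eq_integral_re {μ : Measure X} {f : X → ℂ} (hf : Integrable f μ) :
    (∫ x, f x ∂μ).re = ∫ x, (f x).re ∂μ :=
  (integral_re hf).symm

lemma integrable_inv_one_sub_ofReal_mul_I {μ : Measure X} [IsFiniteMeasure μ] {g : X → ℝ}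
    (hg : Measurable g) : Integrable (fun x ↦ (1 - (g x : ℂ) * I)⁻¹) μ :=
  .of_bound (continuous_inv_one_sub_ofReal_mul_I.measurable.comp hg).aestronglyMeasurable 1
    (ae_of_all _ fun _ ↦ norm_inv_one_sub_ofReal_mul_I_le_one _)

lemma integrable_inv_one_sub_ofReal_mul_I_mul_conj {μ : Measure X} {ν : Measure Y}
    [IsFiniteMeasure μ] [IsFiniteMeasure ν] {g : X → ℝ} {h : Y → ℝ} (hg : Measurable g)
    (hh : Measurable h) :
    Integrable (fun p : X × Y ↦ (1 - (g p.1 : ℂ) * I)⁻¹ * conj (1 - (h p.2 : ℂ) * I)⁻¹)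
      (μ.prod ν) := by
  have hφ := continuous_inv_one_sub_ofReal_mul_I.measurable
  refine .of_bound (Measurable.aestronglyMeasurable ?_) 1 (ae_of_all _ fun p ↦ ?_)
  · exact (hφ.comp (hg.comp measurable_fst)).mul
      (continuous_conj.measurable.comp (hφ.comp (hh.comp measurable_snd)))
  rw [norm_mul, RCLike.norm_conj]
  exact mul_le_one₀ (norm_inv_one_sub_ofReal_mul_I_le_one _) (norm_nonneg _)
    (norm_inv_one_sub_ofReal_mul_I_le_one _)

lemma re_integral_mul_conj_integral {μ : Measure X} {ν : Measure Y} [IsFiniteMeasure μ]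
    [IsFiniteMeasure ν] {g : X → ℝ} {h : Y → ℝ} (hg : Measurable g) (hh : Measurable h) :
    ((∫ x, (1 - (g x : ℂ) * I)⁻¹ ∂μ) * conj (∫ y, (1 - (h y : ℂ) * I)⁻¹ ∂ν)).re
      = ∫ p, ((1 - (g p.1 : ℂ) * I)⁻¹ * conj (1 - (h p.2 : ℂ) * I)⁻¹).re ∂μ.prod ν := by
  rw [← integral_conj, ← integral_prod_mul,
    re_integral_eq_integral_re (integrable_inv_one_sub_ofReal_mul_I_mul_conj hg hh)]

lemma integral_nonneg_of_add_swap_nonneg {μ : Measure X} [SFinite μ] {K : X × X → ℝ}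
    (hK : Integrable K (μ.prod μ)) (h : ∀ᵐ p ∂μ.prod μ, 0 ≤ K p + K p.swap) :
    0 ≤ ∫ p, K p ∂μ.prod μ := by
  have hsum := integral_nonneg_of_ae h
  rw [integral_add hK (hK.swap : Integrable (fun p ↦ K p.swap) _), integral_prod_swap K] at hsum
  linarith

end Integrals

noncomputable def stieltjes (μ : Measure ℝ) (z : ℂ) : ℂ := ∫ t, (1 - (t : ℂ) * z)⁻¹ ∂μ

section Stieltjes

variable {μ ν : Measure ℝ}

lemma stieltjes_ofReal_mul_I (x : ℝ) :
    stieltjes μ (x * I) = ∫ s, (1 - ((s * x : ℝ) : ℂ) * I)⁻¹ ∂μ := by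
  simp only [stieltjes, ofReal_mul, mul_assoc]

lemma re_stieltjes_ofReal_mul_I_pos [IsFiniteMeasure μ] [NeZero μ] (x : ℝ) :
    0 < (stieltjes μ (x * I)).re := by
  have hint := integrable_inv_one_sub_ofReal_mul_I (μ := μ) (measurable_mul_const x)
  have hpos (s : ℝ) := re_inv_one_sub_ofReal_mul_I_pos (s * x)
  rw [stieltjes_ofReal_mul_I, re_integral_eq_integral_re hint,
    integral_pos_iff_support_of_nonneg (fun s ↦ (hpos s).le) hint.re,
    Function.support_eq_univ fun s ↦ (hpos s).ne']
  exact Measure.measure_univ_pos.2 (NeZero.ne μ)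

lemma stieltjes_map_mul [IsFiniteMeasure μ] [IsFiniteMeasure ν] (x : ℝ) :
    stieltjes ((μ.prod ν).map (fun p ↦ p.1 * p.2)) (x * I)
      = ∫ t, stieltjes μ ((t * x : ℝ) * I) ∂ν := by
  simp_rw [stieltjes_ofReal_mul_I]
  rw [integral_map (f := fun q ↦ (1 - ((q * x : ℝ) : ℂ) * I)⁻¹) (by fun_prop)
      (continuous_inv_one_sub_ofReal_mul_I.comp (continuous_mul_const x)).aestronglyMeasurable,
    integral_prod_symm _ (integrable_inv_one_sub_ofReal_mul_I (by fun_prop))]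
  simp only [mul_assoc]

lemma normSq_stieltjes_le_re_mul_conj [IsFiniteMeasure μ] (hμ : ∀ᵐ s ∂μ, 0 ≤ s) {x : ℝ}
    (hx : 0 ≤ x) {t : ℝ} (ht : t ∈ Icc (0 : ℝ) 1) :
    normSq (stieltjes μ (x * I))
      ≤ (stieltjes μ ((t * x : ℝ) * I) * conj (stieltjes μ (x * I))).re := by
  simp only [stieltjes_ofReal_mul_I]
  have hgt : Measurable fun s : ℝ ↦ s * (t * x) := by fun_prop
  have hg : Measurable fun s : ℝ ↦ s * x := by fun_prop
  have i₁ := (integrable_inv_one_sub_ofReal_mul_I_mul_conj (μ := μ) (ν := μ) hgt hg).re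
  have i₂ := (integrable_inv_one_sub_ofReal_mul_I_mul_conj (μ := μ) (ν := μ) hg hg).re
  simp only [RCLike.re_to_complex] at i₁ i₂
  rw [← sub_nonneg, ← ofReal_re (normSq _), ← mul_conj, re_integral_mul_conj_integral hgt hg,
    re_integral_mul_conj_integral hg hg, ← integral_sub i₁ i₂]
  refine integral_nonneg_of_add_swap_nonneg (i₁.sub i₂) ?_
  filter_upwards [Measure.quasiMeasurePreserving_fst.ae hμ,
    Measure.quasiMeasurePreserving_snd.ae hμ] with p hs hu
  simp only [Prod.fst_swap, Prod.snd_swap, mul_left_comm _ t x]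
  exact re_inv_one_sub_ofReal_mul_I_mul_conj_sub_add_swap_nonneg _ _ t (mul_nonneg hs hx)
    (mul_nonneg hu hx) ht

lemma normSq_stieltjes_le_re_stieltjes_map_mul_mul_conj [IsFiniteMeasure μ]
    [IsProbabilityMeasure ν] (hμ : ∀ᵐ s ∂μ, 0 ≤ s) (hν : ∀ᵐ t ∂ν, t ∈ Icc (0 : ℝ) 1) {x : ℝ}
    (hx : 0 ≤ x) :
    normSq (stieltjes μ (x * I)) ≤
      (stieltjes ((μ.prod ν).map (fun p ↦ p.1 * p.2)) (x * I) * conj (stieltjes μ (x * I))).re := by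
  have hint : Integrable (fun t ↦ stieltjes μ ((t * x : ℝ) * I)) ν := by
    simp_rw [stieltjes_ofReal_mul_I]
    exact (integrable_inv_one_sub_ofReal_mul_I (μ := μ.prod ν)
      (g := fun p ↦ p.1 * (p.2 * x)) (by fun_prop)).integral_prod_right
  rw [stieltjes_map_mul, ← integral_mul_const, re_integral_eq_integral_re (hint.mul_const _)]
  calc normSq (stieltjes μ (x * I)) = ∫ _, normSq (stieltjes μ (x * I)) ∂ν := by simp
    _ ≤ _ := integral_mono_ae (integrable_const _) (hint.mul_const _).re
      (hν.mono fun t ht ↦ normSq_stieltjes_le_re_mul_conj hμ hx ht)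

end Stieltjes

theorem stmt4 (μ ν ρ : Measure ℝ)
    [IsProbabilityMeasure μ] [IsProbabilityMeasure ν] [IsProbabilityMeasure ρ]
    (hμ : μ (Set.Icc (0:ℝ) 1)ᶜ = 0) (hν : ν (Set.Icc (0:ℝ) 1)ᶜ = 0)
    (hρ : ρ (Set.Icc (0:ℝ) 1)ᶜ = 0)
    -- the moments of ρ are the products of the moments of μ and ν,
    -- i.e. ρ generates the Hadamard product f*g
    (hmom : ∀ k : ℕ, (∫ t, t ^ k ∂ρ) = (∫ t, t ^ k ∂μ) * (∫ t, t ^ k ∂ν))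
    (f fg : ℂ → ℂ)
    (hf : ∀ z : ℂ, f z = ∫ t, (1 - (t:ℂ) * z)⁻¹ ∂μ)
    (hfg : ∀ z : ℂ, fg z = ∫ t, (1 - (t:ℂ) * z)⁻¹ ∂ρ)
    (y : ℝ) (hy : 0 < y) :
    1 ≤ ((fg (y * Complex.I)) / (f (y * Complex.I))).re := by
  have hμ' : ∀ᵐ s ∂μ, s ∈ Icc (0 : ℝ) 1 := mem_ae_iff.2 hμ
  have hν' : ∀ᵐ t ∂ν, t ∈ Icc (0 : ℝ) 1 := mem_ae_iff.2 hν
  have hρ_eq := eq_map_mul_of_moments_eq_mul hμ' hν' (mem_ae_iff.2 hρ) hmom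
  rw [show f = stieltjes μ from funext hf, show fg = stieltjes ρ from funext hfg, hρ_eq]
  refine one_le_re_div_of_normSq_le_re_mul_conj
    (fun h ↦ (re_stieltjes_ofReal_mul_I_pos (μ := μ) y).ne' (by rw [h, zero_re])) ?_
  exact normSq_stieltjes_le_re_stieltjes_map_mul_mul_conj (hμ'.mono fun s hs ↦ hs.1) hν' hy.le
end

section
/- For 0 ≤ α ≤ β and y > 0, one has |Li_α(iy)| ≤ |Li_β(iy)|, where Li_α(z) = Σ_{k≥1} zᵏ/k^α is the polylogarithm. -/
/-!
Write `H_μ(y) = imagStieltjes μ y = ∫ (1 - i t y)⁻¹ dμ(t)`, so that `Li_α(iy) = iy H_{μα}(y)`.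
Since `(k+1)^{-β} = (k+1)^{-(β-α)} (k+1)^{-α}` and a finite measure on `[0,1]` is determined by its
moments, `μβ` is the multiplicative convolution `ν ∗ μα`, where `ν` is the law of `e^{-X}` with
`X ∼ Γ(β-α, 1)`; hence `H_{μβ}(y) = ∫ H_{μα}(u y) dν(u)` with `u ∈ [0,1]`.

For a measure `μ` on `[0,∞)` and `0 ≤ x ≤ y`, writing `Re (H_μ(x) conj H_μ(y))` as a double
integral over `(s, t)` and symmetrising in `s ↔ t` gives `|H_μ(y)|² ≤ Re (H_μ(x) conj H_μ(y))`.
Averaging over `x = u y` yields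
`|H_{μα}(y)|² ≤ Re (H_{μβ}(y) conj H_{μα}(y)) ≤ |H_{μβ}(y)| |H_{μα}(y)|`.
-/

open MeasureTheory Complex

namespace MeasureTheory

section MomentDeterminacy

variable {μ ν : Measure ℝ} [IsFiniteMeasure μ] [IsFiniteMeasure ν]

lemma integrable_of_continuous_of_ae_mem_Icc (hμ : ∀ᵐ t ∂μ, t ∈ Set.Icc (0 : ℝ) 1)
    {E : Type*} [NormedAddCommGroup E] {f : ℝ → E} (hf : Continuous f) : Integrable f μ := by
  rw [← Measure.restrict_eq_self_of_ae_mem hμ]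
  exact hf.continuousOn.integrableOn_compact isCompact_Icc

lemma integral_eval_eq_of_moments_eq (hμ : ∀ᵐ t ∂μ, t ∈ Set.Icc (0 : ℝ) 1)
    (hν : ∀ᵐ t ∂ν, t ∈ Set.Icc (0 : ℝ) 1) (hm : ∀ k : ℕ, ∫ t, t ^ k ∂μ = ∫ t, t ^ k ∂ν)
    (p : Polynomial ℝ) : ∫ t, p.eval t ∂μ = ∫ t, p.eval t ∂ν := by
  have integral_eval (ρ : Measure ℝ) [IsFiniteMeasure ρ]
      (hρ : ∀ᵐ t ∂ρ, t ∈ Set.Icc (0 : ℝ) 1) :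
      ∫ t, p.eval t ∂ρ = ∑ i ∈ Finset.range (p.natDegree + 1), p.coeff i * ∫ t, t ^ i ∂ρ := by
    simp_rw [p.eval_eq_sum_range]
    rw [integral_finsetSum _ fun i _ =>
      (integrable_of_continuous_of_ae_mem_Icc hρ (continuous_pow i)).const_mul _]
    simp_rw [integral_const_mul]
  simp_rw [integral_eval μ hμ, integral_eval ν hν, hm]

lemma abs_integral_sub_le_of_forall_mem_Icc (hμ : ∀ᵐ t ∂μ, t ∈ Set.Icc (0 : ℝ) 1) {f g : ℝ → ℝ}
    (hf : Continuous f) (hg : Continuous g) {ε : ℝ}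
    (hfg : ∀ t ∈ Set.Icc (0 : ℝ) 1, |f t - g t| ≤ ε) :
    |∫ t, f t ∂μ - ∫ t, g t ∂μ| ≤ ε * μ.real Set.univ := by
  rw [← integral_sub (integrable_of_continuous_of_ae_mem_Icc hμ hf)
    (integrable_of_continuous_of_ae_mem_Icc hμ hg)]
  exact norm_integral_le_of_norm_le_const (f := fun t => f t - g t)
    (hμ.mono fun t ht => hfg t ht)

lemma integral_eq_of_moments_eq (hμ : ∀ᵐ t ∂μ, t ∈ Set.Icc (0 : ℝ) 1)
    (hν : ∀ᵐ t ∂ν, t ∈ Set.Icc (0 : ℝ) 1) (hm : ∀ k : ℕ, ∫ t, t ^ k ∂μ = ∫ t, t ^ k ∂ν)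
    {f : ℝ → ℝ} (hf : Continuous f) : ∫ t, f t ∂μ = ∫ t, f t ∂ν := by
  set C := μ.real Set.univ + ν.real Set.univ + 1
  have hC : 0 < C := by positivity
  refine eq_of_forall_dist_le fun ε hε => ?_
  obtain ⟨p, hp⟩ := exists_polynomial_near_of_continuousOn 0 1 f hf.continuousOn (ε / C)
    (by positivity)
  have hpf : ∀ t ∈ Set.Icc (0 : ℝ) 1, |f t - p.eval t| ≤ ε / C := fun t ht => by
    rw [abs_sub_comm]; exact (hp t ht).le
  have hμp := abs_integral_sub_le_of_forall_mem_Icc hμ hf p.continuous hpf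
  have hνp := abs_integral_sub_le_of_forall_mem_Icc hν hf p.continuous hpf
  rw [integral_eval_eq_of_moments_eq hμ hν hm p] at hμp
  calc dist (∫ t, f t ∂μ) (∫ t, f t ∂ν)
      ≤ ε / C * μ.real Set.univ + ε / C * ν.real Set.univ := by
        rw [Real.dist_eq]
        linarith [abs_sub_le (∫ t, f t ∂μ) (∫ t, p.eval t ∂ν) (∫ t, f t ∂ν),
          abs_sub_comm (∫ t, f t ∂ν) (∫ t, p.eval t ∂ν)]
    _ ≤ ε := by
        rw [← mul_add, div_mul_eq_mul_div, div_le_iff₀ hC]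
        nlinarith

theorem Measure.ext_of_moments_eq (hμ : ∀ᵐ t ∂μ, t ∈ Set.Icc (0 : ℝ) 1)
    (hν : ∀ᵐ t ∂ν, t ∈ Set.Icc (0 : ℝ) 1) (hm : ∀ k : ℕ, ∫ t, t ^ k ∂μ = ∫ t, t ^ k ∂ν) :
    μ = ν :=
  ext_of_forall_integral_eq_of_IsFiniteMeasure fun f =>
    integral_eq_of_moments_eq hμ hν hm f.continuous

end MomentDeterminacy

end MeasureTheory

namespace ProbabilityTheory

lemma integral_exp_neg_mul_gammaMeasure {a r c : ℝ} (ha : 0 < a) (hr : 0 < r)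
    (hrc : 0 < r + c) :
    ∫ x, Real.exp (-(c * x)) ∂gammaMeasure a r = (r / (r + c)) ^ a := by
  have hpdf : ∀ x, (gammaPDF a r x).toReal = gammaPDFReal a r x := fun x =>
    ENNReal.toReal_ofReal (gammaPDFReal_nonneg ha hr x)
  have hdensity : ∀ x ∈ Set.Ioi (0 : ℝ), gammaPDFReal a r x * Real.exp (-(c * x))
      = r ^ a / Real.Gamma a * (x ^ (a - 1) * Real.exp (-((r + c) * x))) := fun x hx => by
    rw [gammaPDFReal, if_pos (le_of_lt hx), add_mul, neg_add, Real.exp_add]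
    ring
  rw [gammaMeasure, integral_withDensity_eq_integral_toReal_smul (f := gammaPDF a r)
    (measurable_gammaPDFReal a r).ennreal_ofReal (ae_of_all _ fun _ => ENNReal.ofReal_lt_top)]
  simp_rw [hpdf, smul_eq_mul]
  rw [← setIntegral_eq_integral_of_forall_compl_eq_zero (s := Set.Ici 0) fun x hx => by
      rw [gammaPDFReal, if_neg (by simpa using hx), zero_mul],
    integral_Ici_eq_integral_Ioi, setIntegral_congr_fun measurableSet_Ioi hdensity,
    integral_const_mul, Real.integral_rpow_mul_exp_neg_mul_Ioi ha hrc,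
    Real.div_rpow hr.le hrc.le, one_div, Real.inv_rpow hrc.le]
  field_simp [(Real.Gamma_pos_of_pos ha).ne']

lemma ae_nonneg_gammaMeasure (a r : ℝ) : ∀ᵐ x ∂gammaMeasure a r, 0 ≤ x := by
  rw [ae_iff, gammaMeasure, withDensity_apply _ (by measurability)]
  simpa [Set.Iio] using lintegral_gammaPDF_of_nonpos le_rfl

lemma exists_isProbabilityMeasure_moments_eq_inv_rpow {γ : ℝ} (hγ : 0 ≤ γ) :
    ∃ ν : Measure ℝ, IsProbabilityMeasure ν ∧ (∀ᵐ u ∂ν, u ∈ Set.Icc (0 : ℝ) 1) ∧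
      ∀ k : ℕ, ∫ u, u ^ k ∂ν = 1 / ((k : ℝ) + 1) ^ γ := by
  rcases hγ.eq_or_lt with rfl | hγ
  · exact ⟨Measure.dirac 1, inferInstance, by simp, by simp⟩
  have := isProbabilityMeasure_gammaMeasure hγ one_pos
  have hexp : Measurable fun x : ℝ => Real.exp (-x) := by fun_prop
  refine ⟨(gammaMeasure γ 1).map fun x => Real.exp (-x),
    Measure.isProbabilityMeasure_map hexp.aemeasurable, ?_, fun k => ?_⟩
  · refine (ae_map_iff hexp.aemeasurable measurableSet_Icc).mpr ?_
    filter_upwards [ae_nonneg_gammaMeasure γ 1] with x hx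
    exact ⟨(Real.exp_pos _).le, Real.exp_le_one_iff.mpr (neg_nonpos.mpr hx)⟩
  · rw [integral_map hexp.aemeasurable (continuous_pow k).aestronglyMeasurable]
    simp_rw [← Real.exp_nat_mul, mul_neg]
    rw [integral_exp_neg_mul_gammaMeasure hγ one_pos (by positivity), one_div, add_comm,
      Real.inv_rpow (by positivity), one_div]

end ProbabilityTheory

namespace MeasureTheory.Measure

variable {μ ν : Measure ℝ}

lemma ae_mem_Icc_mconv (hμ : ∀ᵐ t ∂μ, t ∈ Set.Icc (0 : ℝ) 1)
    (hν : ∀ᵐ t ∂ν, t ∈ Set.Icc (0 : ℝ) 1) :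
    ∀ᵐ t ∂(μ ∗ₘ ν), t ∈ Set.Icc (0 : ℝ) 1 := by
  refine (ae_map_iff (by fun_prop) measurableSet_Icc).mpr ?_
  filter_upwards [quasiMeasurePreserving_fst.ae hμ, quasiMeasurePreserving_snd.ae hν]
    with p hp₁ hp₂ using unitInterval.mul_mem hp₁ hp₂

lemma integral_pow_mconv [SFinite μ] [SFinite ν] (k : ℕ) :
    ∫ t, t ^ k ∂(μ ∗ₘ ν) = (∫ t, t ^ k ∂μ) * ∫ t, t ^ k ∂ν := by
  rw [mconv, integral_map (by fun_prop) (by fun_prop), ← integral_prod_mul]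
  simp_rw [mul_pow]

end MeasureTheory.Measure

lemma re_one_sub_ofReal_mul_mul_I (t y : ℝ) : (1 - (t : ℂ) * (y * I)).re = 1 := by
  simp

lemma norm_inv_one_sub_ofReal_mul_mul_I_le_one (t y : ℝ) : ‖(1 - (t : ℂ) * (y * I))⁻¹‖ ≤ 1 := by
  rw [norm_inv]
  exact inv_le_one_of_one_le₀ (re_one_sub_ofReal_mul_mul_I t y ▸ re_le_norm _)

lemma Continuous.inv_one_sub_ofReal_mul_mul_I {X : Type*} [TopologicalSpace X] {f g : X → ℝ}
    (hf : Continuous f) (hg : Continuous g) :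
    Continuous fun x => (1 - (f x : ℂ) * (g x * I))⁻¹ :=
  Continuous.inv₀ (by fun_prop) fun x h => by
    simpa [h] using re_one_sub_ofReal_mul_mul_I (f x) (g x)

noncomputable def crossKernel (a b : ℝ) : ℝ := (1 + a * b) / ((1 + a ^ 2) * (1 + b ^ 2))

lemma re_inv_mul_conj_inv_s6 (s t x y : ℝ) :
    ((1 - (s : ℂ) * (x * I))⁻¹ * (starRingEnd ℂ) (1 - (t : ℂ) * (y * I))⁻¹).re
      = crossKernel (s * x) (t * y) := by
  simp only [crossKernel, map_inv₀, map_sub, map_one, map_mul, conj_ofReal, conj_I, mul_neg,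
    sub_neg_eq_add, mul_re, inv_re, sub_re, one_re, ofReal_re, I_re, mul_zero, ofReal_im, I_im,
    mul_one, sub_self, mul_im, add_zero, zero_mul, sub_zero, normSq_apply, sub_im, one_im,
    zero_sub, neg_mul, neg_neg, one_div, add_re, add_im, zero_add, inv_im]
  field_simp
  ring

lemma two_mul_crossKernel_le {s t x y : ℝ} (hs : 0 ≤ s) (ht : 0 ≤ t) (hx : 0 ≤ x)
    (hxy : x ≤ y) :
    2 * crossKernel (s * y) (t * y)
      ≤ crossKernel (s * x) (t * y) + crossKernel (t * x) (s * y) := by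
  have key : 0 ≤ (1 + s * x * (t * y)) * ((1 + (t * x) ^ 2) * (1 + (s * y) ^ 2)
      + (1 + (s * x) ^ 2) * (1 + (t * y) ^ 2))
      - 2 * (1 + s * y * (t * y)) * ((1 + (s * x) ^ 2) * (1 + (t * x) ^ 2)) := by
    have h : (1 + s * x * (t * y)) * ((1 + (t * x) ^ 2) * (1 + (s * y) ^ 2)
        + (1 + (s * x) ^ 2) * (1 + (t * y) ^ 2))
        - 2 * (1 + s * y * (t * y)) * ((1 + (s * x) ^ 2) * (1 + (t * x) ^ 2))
        = (y - x) * (x * (s ^ 2 + t ^ 2) + y * (s - t) ^ 2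
          + s * t * x * y * (y - x) * (s ^ 2 + t ^ 2) + 2 * s ^ 2 * t ^ 2 * x ^ 2 * (x + y)
          + 2 * s ^ 3 * t ^ 3 * x ^ 3 * y ^ 2) := by
      ring
    have : 0 ≤ y - x := by linarith
    have : 0 ≤ y := by linarith
    rw [h]
    positivity
  unfold crossKernel
  rw [div_add_div _ _ (by positivity) (by positivity), mul_div_assoc',
    div_le_div_iff₀ (by positivity) (by positivity)]
  nlinarith [mul_nonneg key (by positivity : (0 : ℝ) ≤ (1 + (s * y) ^ 2) * (1 + (t * y) ^ 2))]

noncomputable def imagStieltjes (μ : Measure ℝ) (y : ℝ) : ℂ := ∫ t, (1 - (t : ℂ) * (y * I))⁻¹ ∂μ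

section imagStieltjes

variable (μ : Measure ℝ) [IsFiniteMeasure μ]

lemma integrable_inv_one_sub_ofReal_mul_mul_I (y : ℝ) :
    Integrable (fun t : ℝ => (1 - (t : ℂ) * (y * I))⁻¹) μ :=
  .of_bound (continuous_id.inv_one_sub_ofReal_mul_mul_I continuous_const).aestronglyMeasurable 1
    (ae_of_all _ fun t => norm_inv_one_sub_ofReal_mul_mul_I_le_one t y)

lemma continuous_imagStieltjes : Continuous (imagStieltjes μ) :=
  continuous_of_dominated
    (fun y => (integrable_inv_one_sub_ofReal_mul_mul_I μ y).aestronglyMeasurable)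
    (fun y => ae_of_all _ fun t => norm_inv_one_sub_ofReal_mul_mul_I_le_one t y)
    (integrable_const 1)
    (ae_of_all _ fun _ => continuous_const.inv_one_sub_ofReal_mul_mul_I continuous_id)

lemma imagStieltjes_mconv (ν : Measure ℝ) [IsFiniteMeasure ν] (y : ℝ) :
    imagStieltjes (ν ∗ₘ μ) y = ∫ u, imagStieltjes μ (u * y) ∂ν := by
  rw [imagStieltjes, integral_mconv (integrable_inv_one_sub_ofReal_mul_mul_I _ y)]
  congr 1 with u
  rw [imagStieltjes]
  congr 1 with s
  push_cast
  ring

lemma integrable_inv_mul_conj_inv (x y : ℝ) : Integrable (fun p : ℝ × ℝ =>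
    (1 - (p.1 : ℂ) * (x * I))⁻¹ * (starRingEnd ℂ) (1 - (p.2 : ℂ) * (y * I))⁻¹) (μ.prod μ) :=
  .of_bound (by fun_prop) 1 (ae_of_all _ fun p => by
    rw [norm_mul, Complex.norm_conj]
    exact mul_le_one₀ (norm_inv_one_sub_ofReal_mul_mul_I_le_one _ _) (norm_nonneg _)
      (norm_inv_one_sub_ofReal_mul_mul_I_le_one _ _))

lemma integrable_crossKernel (x y : ℝ) :
    Integrable (fun p : ℝ × ℝ => crossKernel (p.1 * x) (p.2 * y)) (μ.prod μ) := by
  simpa only [RCLike.re_to_complex, re_inv_mul_conj_inv_s6]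
    using (integrable_inv_mul_conj_inv μ x y).re

lemma re_imagStieltjes_mul_conj (x y : ℝ) :
    (imagStieltjes μ x * (starRingEnd ℂ) (imagStieltjes μ y)).re
      = ∫ p, crossKernel (p.1 * x) (p.2 * y) ∂(μ.prod μ) := by
  have hre := integral_re (integrable_inv_mul_conj_inv μ x y)
  simp only [RCLike.re_to_complex, re_inv_mul_conj_inv_s6] at hre
  rw [imagStieltjes, imagStieltjes, ← integral_conj, ← integral_prod_mul, hre]

variable {μ} in
lemma sq_norm_imagStieltjes_le_re_mul_conj (hμ : ∀ᵐ t ∂μ, 0 ≤ t) {x y : ℝ} (hx : 0 ≤ x)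
    (hxy : x ≤ y) :
    ‖imagStieltjes μ y‖ ^ 2 ≤ (imagStieltjes μ x * (starRingEnd ℂ) (imagStieltjes μ y)).re := by
  have hint := fun x => integrable_crossKernel μ x y
  have hswap : ∀ x, ∫ p, crossKernel (p.1 * x) (p.2 * y) ∂(μ.prod μ)
      = ∫ p, crossKernel (p.2 * x) (p.1 * y) ∂(μ.prod μ) := fun x =>
    (integral_prod_swap (fun p : ℝ × ℝ => crossKernel (p.1 * x) (p.2 * y))).symm
  have hpointwise : ∀ᵐ p ∂(μ.prod μ), 2 * crossKernel (p.1 * y) (p.2 * y)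
      ≤ crossKernel (p.1 * x) (p.2 * y) + crossKernel (p.2 * x) (p.1 * y) := by
    filter_upwards [Measure.quasiMeasurePreserving_fst.ae hμ,
      Measure.quasiMeasurePreserving_snd.ae hμ] with p hp₁ hp₂
    exact two_mul_crossKernel_le hp₁ hp₂ hx hxy
  have hint' : Integrable (fun p : ℝ × ℝ => crossKernel (p.2 * x) (p.1 * y)) (μ.prod μ) :=
    (hint x).swap
  have hmono : ∫ p, 2 * crossKernel (p.1 * y) (p.2 * y) ∂(μ.prod μ)
      ≤ ∫ p, (crossKernel (p.1 * x) (p.2 * y) + crossKernel (p.2 * x) (p.1 * y)) ∂(μ.prod μ) :=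
    integral_mono_ae ((hint y).const_mul 2) ((hint x).add hint') hpointwise
  rw [integral_const_mul, integral_add (hint x) hint', ← hswap,
    ← re_imagStieltjes_mul_conj, ← re_imagStieltjes_mul_conj, mul_conj'] at hmono
  norm_cast at hmono
  linarith

end imagStieltjes

lemma norm_le_norm_of_sq_norm_le_re_mul_conj {a b : ℂ}
    (h : ‖a‖ ^ 2 ≤ (b * (starRingEnd ℂ) a).re) : ‖a‖ ≤ ‖b‖ := by
  have : (b * (starRingEnd ℂ) a).re ≤ ‖b‖ * ‖a‖ := by
    simpa using re_le_norm (b * (starRingEnd ℂ) a)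
  nlinarith [norm_nonneg a, norm_nonneg b]

theorem norm_imagStieltjes_le_mconv {μ ν : Measure ℝ} [IsFiniteMeasure μ] [IsProbabilityMeasure ν]
    (hμ : ∀ᵐ t ∂μ, 0 ≤ t) (hν : ∀ᵐ u ∂ν, u ∈ Set.Icc (0 : ℝ) 1) {y : ℝ} (hy : 0 ≤ y) :
    ‖imagStieltjes μ y‖ ≤ ‖imagStieltjes (ν ∗ₘ μ) y‖ := by
  refine norm_le_norm_of_sq_norm_le_re_mul_conj ?_
  have hint : Integrable
      (fun u => imagStieltjes μ (u * y) * (starRingEnd ℂ) (imagStieltjes μ y)) ν :=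
    integrable_of_continuous_of_ae_mem_Icc hν
      (((continuous_imagStieltjes μ).comp (by fun_prop)).mul continuous_const)
  calc ‖imagStieltjes μ y‖ ^ 2 = ∫ _, ‖imagStieltjes μ y‖ ^ 2 ∂ν := by simp
    _ ≤ ∫ u, (imagStieltjes μ (u * y) * (starRingEnd ℂ) (imagStieltjes μ y)).re ∂ν := by
      refine integral_mono_ae (integrable_const _) hint.re ?_
      filter_upwards [hν] with u hu
      exact sq_norm_imagStieltjes_le_re_mul_conj hμ (mul_nonneg hu.1 hy)
        (mul_le_of_le_one_left hy hu.2)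
    _ = (imagStieltjes (ν ∗ₘ μ) y * (starRingEnd ℂ) (imagStieltjes μ y)).re := by
      rw [imagStieltjes_mconv, ← integral_mul_const, ← RCLike.re_to_complex, ← integral_re hint]
      rfl

theorem stmt6_general (α β : ℝ) (hαβ : α ≤ β)
    (μα μβ : Measure ℝ) [IsProbabilityMeasure μα] [IsProbabilityMeasure μβ]
    (hμα : μα (Set.Icc (0:ℝ) 1)ᶜ = 0) (hμβ : μβ (Set.Icc (0:ℝ) 1)ᶜ = 0)
    -- the moments of μα are 1/(k+1)^α, so z * ∫ (1-tz)⁻¹ dμα is the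
    -- analytic continuation of Li_α to the slit plane; similarly for β
    (hmα : ∀ k : ℕ, (∫ t, t ^ k ∂μα) = 1 / ((k : ℝ) + 1) ^ α)
    (hmβ : ∀ k : ℕ, (∫ t, t ^ k ∂μβ) = 1 / ((k : ℝ) + 1) ^ β)
    (Liα Liβ : ℂ → ℂ)
    (hLiα : ∀ z : ℂ, Liα z = z * ∫ t, (1 - (t:ℂ) * z)⁻¹ ∂μα)
    (hLiβ : ∀ z : ℂ, Liβ z = z * ∫ t, (1 - (t:ℂ) * z)⁻¹ ∂μβ)
    (y : ℝ) (hy : 0 < y) :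
    ‖Liα (y * Complex.I)‖ ≤ ‖Liβ (y * Complex.I)‖ := by
  have hμα₀₁ : ∀ᵐ t ∂μα, t ∈ Set.Icc (0 : ℝ) 1 := hμα
  obtain ⟨ν, hν, hν₀₁, hνm⟩ :=
    ProbabilityTheory.exists_isProbabilityMeasure_moments_eq_inv_rpow (sub_nonneg.mpr hαβ)
  have hμβ_eq : μβ = ν ∗ₘ μα := by
    refine Measure.ext_of_moments_eq hμβ (Measure.ae_mem_Icc_mconv hν₀₁ hμα₀₁) fun k => ?_
    have hk : (0 : ℝ) < k + 1 := by positivity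
    rw [Measure.integral_pow_mconv, hmβ, hνm, hmα, one_div_mul_one_div, ← Real.rpow_add hk,
      sub_add_cancel]
  rw [hLiα, hLiβ, hμβ_eq, norm_mul (y * I), norm_mul (y * I)]
  exact mul_le_mul_of_nonneg_left
    (norm_imagStieltjes_le_mconv (hμα₀₁.mono fun _ ht => ht.1) hν₀₁ hy.le) (norm_nonneg _)

theorem stmt6 (α β : ℝ) (hα : 0 ≤ α) (hαβ : α ≤ β)
    (μα μβ : Measure ℝ) [IsProbabilityMeasure μα] [IsProbabilityMeasure μβ]
    (hμα : μα (Set.Icc (0:ℝ) 1)ᶜ = 0) (hμβ : μβ (Set.Icc (0:ℝ) 1)ᶜ = 0)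
    -- the moments of μα are 1/(k+1)^α, so z * ∫ (1-tz)⁻¹ dμα is the
    -- analytic continuation of Li_α to the slit plane; similarly for β
    (hmα : ∀ k : ℕ, (∫ t, t ^ k ∂μα) = 1 / ((k : ℝ) + 1) ^ α)
    (hmβ : ∀ k : ℕ, (∫ t, t ^ k ∂μβ) = 1 / ((k : ℝ) + 1) ^ β)
    (Liα Liβ : ℂ → ℂ)
    (hLiα : ∀ z : ℂ, Liα z = z * ∫ t, (1 - (t:ℂ) * z)⁻¹ ∂μα)
    (hLiβ : ∀ z : ℂ, Liβ z = z * ∫ t, (1 - (t:ℂ) * z)⁻¹ ∂μβ)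
    (y : ℝ) (hy : 0 < y) :
    ‖Liα (y * Complex.I)‖ ≤ ‖Liβ (y * Complex.I)‖ :=
  stmt6_general α β hαβ μα μβ hμα hμβ hmα hmβ Liα Liβ hLiα hLiβ y hy
end

section
/- For 0 < τ ≤ 1 and y > 0, the function v(t) = (1 - t - iyt)/(1 - t - iτyt) has Re v(t) increasing for t ∈ [0,1]; in particular Re v(t) ≥ Re v(0) = 1 for all t ∈ [0,1]. -/
/-!
Computing the real part gives
`Re v(t) = 1 + τ(1 - τ) y² · t² / ((1 - t)² + τ² y² t²)`, with a nonnegative coefficient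
`τ(1 - τ) y²`. The last factor is monotone on `[0, 1]`: after cross-multiplying, `s ≤ t` amounts
to `s (1 - t) ≤ t (1 - s)`. Hence `Re v` is monotone and bounded below by `Re v(0) = 1`.
-/

open Complex Set

lemma sub_sq_add_mul_sq_pos {c : ℝ} (hc : 0 < c) (t : ℝ) : 0 < (1 - t) ^ 2 + c * t ^ 2 := by
  rcases eq_or_ne t 0 with rfl | ht
  · norm_num
  · have : 0 < c * t ^ 2 := by positivity
    nlinarith [sq_nonneg (1 - t)]

lemma monotoneOn_sq_div_sub_sq_add_mul_sq {c : ℝ} (hc : 0 < c) :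
    MonotoneOn (fun t : ℝ => t ^ 2 / ((1 - t) ^ 2 + c * t ^ 2)) (Icc 0 1) := by
  intro s ⟨hs0, hs1⟩ t ⟨ht0, ht1⟩ hst
  dsimp only
  rw [div_le_div_iff₀ (sub_sq_add_mul_sq_pos hc s) (sub_sq_add_mul_sq_pos hc t)]
  have key : s * (1 - t) ≤ t * (1 - s) := by nlinarith
  have : (s * (1 - t)) ^ 2 ≤ (t * (1 - s)) ^ 2 := pow_le_pow_left₀ (by nlinarith) key 2
  nlinarith

lemma re_div_sub_mul_I (a b c : ℝ) :
    ((a - b * I) / (a - c * I)).re = (a ^ 2 + b * c) / (a ^ 2 + c ^ 2) := by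
  rw [div_re, normSq_apply]
  simp only [sub_re, sub_im, ofReal_re, ofReal_im, mul_re, mul_im, I_re, I_im]
  ring

lemma re_div_eq_one_add {y τ : ℝ} (hy : 0 < y) (hτ0 : 0 < τ) (t : ℝ) :
    ((1 - (t:ℂ) - I * y * t) / (1 - (t:ℂ) - I * τ * y * t)).re =
      1 + τ * (1 - τ) * y ^ 2 * (t ^ 2 / ((1 - t) ^ 2 + τ ^ 2 * y ^ 2 * t ^ 2)) := by
  have hD := sub_sq_add_mul_sq_pos (by positivity : 0 < τ ^ 2 * y ^ 2) t
  have h := re_div_sub_mul_I (1 - t) (y * t) (τ * y * t)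
  push_cast at h
  simp only [mul_pow] at h
  rw [show (1 - (t:ℂ) - I * y * t) = 1 - t - y * t * I by ring,
    show (1 - (t:ℂ) - I * τ * y * t) = 1 - t - τ * y * t * I by ring, h, mul_div_assoc',
    one_add_div hD.ne']
  ring

theorem stmt11 (y τ : ℝ) (hy : 0 < y) (hτ0 : 0 < τ) (hτ1 : τ ≤ 1)
    (v : ℝ → ℂ)
    (hv : ∀ t : ℝ, v t = (1 - (t:ℂ) - Complex.I * y * t) / (1 - (t:ℂ) - Complex.I * τ * y * t)) :
    MonotoneOn (fun t : ℝ => (v t).re) (Set.Icc 0 1) ∧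
    (v 0).re = 1 ∧
    ∀ t ∈ Set.Icc (0:ℝ) 1, 1 ≤ (v t).re := by
  have hre : ∀ t, (v t).re =
      1 + τ * (1 - τ) * y ^ 2 * (t ^ 2 / ((1 - t) ^ 2 + τ ^ 2 * y ^ 2 * t ^ 2)) :=
    fun t => hv t ▸ re_div_eq_one_add hy hτ0 t
  have hmono : MonotoneOn (fun t : ℝ => (v t).re) (Icc 0 1) := by
    intro s hs t ht hst
    have hcoef : 0 ≤ τ * (1 - τ) * y ^ 2 := by
      have := sub_nonneg.mpr hτ1
      positivity
    simp only [hre]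
    gcongr 1 + _ * ?_
    exact monotoneOn_sq_div_sub_sq_add_mul_sq (by positivity) hs ht hst
  have hv0 : (v 0).re = 1 := by simp [hre]
  refine ⟨hmono, hv0, fun t ht => hv0 ▸ hmono ⟨le_rfl, zero_le_one⟩ ht ht.1⟩
end

section
/- If f ∈ 𝒯 and f(z)/f(xz) ∈ 𝒯 for all x ∈ (0,1), then for w(y) := |f(iy)| and 0 < x, τ < 1, y > 0: log w(y) - log w(xy) - log w(τy) + log w(xτy) ≤ 0, i.e., log w is 'multiplicatively concave-ordered' along the imaginary axis. -/
open MeasureTheory Complex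

/-- Membership in the class 𝒯 of generating functions of Hausdorff moment
sequences, on the slit plane `ℂ \ [1,∞)`. -/
def MemT (f : ℂ → ℂ) : Prop :=
  ∃ μ : Measure ℝ, IsProbabilityMeasure μ ∧ μ (Set.Icc (0:ℝ) 1)ᶜ = 0 ∧
    ∀ z : ℂ, ¬(z.im = 0 ∧ 1 ≤ z.re) → f z = ∫ t, (1 - (t:ℂ) * z)⁻¹ ∂μ

/-! For `F ∈ 𝒯` with measure `μ` on `[0,1]`,
`|F(iy)|² = ∫∫ (1 + t s y²) / ((1 + t²y²)(1 + s²y²)) dμ(t) dμ(s)`, and since `t s ≥ 0` the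
integrand is nonincreasing in `y²`; so `|F(iy)|` decreases in `|y|`, and `F(iy) ≠ 0` because its
real part is positive. Applied to `g(z) = f(z)/f(xz) ∈ 𝒯` this gives
`w(y)/w(xy) ≤ w(τy)/w(xτy)` with all four values positive, and the claim is its logarithm. -/

open ComplexConjugate

noncomputable def stieltjesKernel (y t : ℝ) : ℂ := (1 - (t:ℂ) * (y * I))⁻¹

lemma one_sub_ofReal_mul_mul_I_re (t y : ℝ) : (1 - (t:ℂ) * (y * I)).re = 1 := by simp

lemma one_le_norm_one_sub_ofReal_mul_mul_I (t y : ℝ) : 1 ≤ ‖1 - (t:ℂ) * (y * I)‖ := by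
  simpa using abs_re_le_norm (1 - (t:ℂ) * (y * I))

lemma norm_stieltjesKernel_le_one (y t : ℝ) : ‖stieltjesKernel y t‖ ≤ 1 := by
  rw [stieltjesKernel, norm_inv]
  exact inv_le_one_of_one_le₀ (one_le_norm_one_sub_ofReal_mul_mul_I t y)

lemma continuous_stieltjesKernel (y : ℝ) : Continuous (stieltjesKernel y) :=
  Continuous.inv₀ (by fun_prop) fun t h => by
    simpa [h] using one_sub_ofReal_mul_mul_I_re t y

lemma integrable_stieltjesKernel (μ : Measure ℝ) [IsFiniteMeasure μ] (y : ℝ) :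
    Integrable (stieltjesKernel y) μ :=
  .of_bound (continuous_stieltjesKernel y).aestronglyMeasurable 1
    (.of_forall (norm_stieltjesKernel_le_one y))

lemma stieltjesKernel_re (y t : ℝ) : (stieltjesKernel y t).re = 1 / (1 + (t * y) ^ 2) := by
  simp [stieltjesKernel, inv_re, normSq_apply]
  ring

lemma stieltjesKernel_mul_conj_re (y t s : ℝ) :
    (stieltjesKernel y t * conj (stieltjesKernel y s)).re
      = (1 + t * s * y ^ 2) / ((1 + (t * y) ^ 2) * (1 + (s * y) ^ 2)) := by
  simp [stieltjesKernel, inv_re, inv_im, normSq_apply]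
  field_simp
  ring

lemma stieltjesKernel_mul_conj_re_le {t s y₁ y₂ : ℝ} (ht : 0 ≤ t) (hs : 0 ≤ s)
    (hy : y₁ ^ 2 ≤ y₂ ^ 2) :
    (stieltjesKernel y₂ t * conj (stieltjesKernel y₂ s)).re
      ≤ (stieltjesKernel y₁ t * conj (stieltjesKernel y₁ s)).re := by
  rw [stieltjesKernel_mul_conj_re, stieltjesKernel_mul_conj_re,
    div_le_div_iff₀ (by positivity) (by positivity)]
  have hts : 0 ≤ t * s := mul_nonneg ht hs
  have hd : 0 ≤ y₂ ^ 2 - y₁ ^ 2 := sub_nonneg.2 hy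
  -- the difference of the two sides is `(y₂² - y₁²)` times
  -- `(t - s)² + t s + (t s)² (y₁² + y₂²) + (t s)³ y₁² y₂²`
  nlinarith [mul_nonneg hd (add_nonneg (sq_nonneg (t - s)) hts),
    mul_nonneg hd (mul_nonneg (sq_nonneg (t * s)) (add_nonneg (sq_nonneg y₁) (sq_nonneg y₂))),
    mul_nonneg hd
      (mul_nonneg hts (mul_nonneg (sq_nonneg (t * s)) (mul_nonneg (sq_nonneg y₁) (sq_nonneg y₂))))]

lemma integrable_stieltjesKernel_mul_conj (μ : Measure ℝ) [IsFiniteMeasure μ] (y : ℝ) :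
    Integrable (fun p : ℝ × ℝ => stieltjesKernel y p.1 * conj (stieltjesKernel y p.2))
      (μ.prod μ) :=
  (integrable_stieltjesKernel μ y).mul_prod
    (conjCLE.toContinuousLinearMap.integrable_comp (integrable_stieltjesKernel μ y))

lemma norm_integral_stieltjesKernel_sq (μ : Measure ℝ) [IsFiniteMeasure μ] (y : ℝ) :
    ‖∫ t, stieltjesKernel y t ∂μ‖ ^ 2
      = ∫ p, (stieltjesKernel y p.1 * conj (stieltjesKernel y p.2)).re ∂μ.prod μ := by
  calc ‖∫ t, stieltjesKernel y t ∂μ‖ ^ 2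
      = ((∫ t, stieltjesKernel y t ∂μ) * conj (∫ t, stieltjesKernel y t ∂μ)).re := by
        rw [mul_conj, ofReal_re, normSq_eq_norm_sq]
    _ = (∫ p, stieltjesKernel y p.1 * conj (stieltjesKernel y p.2) ∂μ.prod μ).re := by
        rw [integral_prod_mul (stieltjesKernel y) (fun s => conj (stieltjesKernel y s)),
          integral_conj]
    _ = _ := (integral_re (integrable_stieltjesKernel_mul_conj μ y)).symm

lemma norm_integral_stieltjesKernel_le {μ : Measure ℝ} [IsFiniteMeasure μ]
    (hμ : ∀ᵐ t ∂μ, 0 ≤ t) {y₁ y₂ : ℝ} (hy : |y₁| ≤ |y₂|) :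
    ‖∫ t, stieltjesKernel y₂ t ∂μ‖ ≤ ‖∫ t, stieltjesKernel y₁ t ∂μ‖ := by
  have hμμ : ∀ᵐ p ∂μ.prod μ, 0 ≤ p.1 ∧ 0 ≤ p.2 :=
    (Measure.quasiMeasurePreserving_fst.ae hμ).and (Measure.quasiMeasurePreserving_snd.ae hμ)
  refine pow_le_pow_iff_left₀ (norm_nonneg _) (norm_nonneg _) two_ne_zero |>.mp ?_
  rw [norm_integral_stieltjesKernel_sq, norm_integral_stieltjesKernel_sq]
  refine integral_mono_ae (integrable_stieltjesKernel_mul_conj μ y₂).re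
    (integrable_stieltjesKernel_mul_conj μ y₁).re (hμμ.mono fun p hp => ?_)
  exact stieltjesKernel_mul_conj_re_le hp.1 hp.2 (sq_le_sq.mpr hy)

lemma integral_stieltjesKernel_ne_zero (μ : Measure ℝ) [IsFiniteMeasure μ] [NeZero μ] (y : ℝ) :
    ∫ t, stieltjesKernel y t ∂μ ≠ 0 := by
  have hre_pos (t : ℝ) : 0 < (stieltjesKernel y t).re := by
    rw [stieltjesKernel_re]; positivity
  have hpos : 0 < ∫ t, (stieltjesKernel y t).re ∂μ := by
    rw [integral_pos_iff_support_of_nonneg (fun t => (hre_pos t).le)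
        (integrable_stieltjesKernel μ y).re,
      Function.support_eq_univ fun t => (hre_pos t).ne']
    exact Measure.measure_univ_pos.mpr (NeZero.ne μ)
  have hre : ∫ t, (stieltjesKernel y t).re ∂μ = (∫ t, stieltjesKernel y t ∂μ).re :=
    integral_re (integrable_stieltjesKernel μ y)
  intro h
  rw [hre, h, zero_re] at hpos
  exact hpos.false

namespace MemT

variable {f : ℂ → ℂ}

lemma exists_apply_mul_I (hf : MemT f) :
    ∃ μ : Measure ℝ, IsProbabilityMeasure μ ∧ (∀ᵐ t ∂μ, 0 ≤ t) ∧
      ∀ y : ℝ, f (y * I) = ∫ t, stieltjesKernel y t ∂μ := by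
  obtain ⟨μ, hμ, hsupp, hf⟩ := hf
  refine ⟨μ, hμ, Filter.mem_of_superset (mem_ae_iff.mpr hsupp) fun _ ht => ht.1,
    fun y => hf _ ?_⟩
  simp

lemma norm_apply_mul_I_le (hf : MemT f) {y₁ y₂ : ℝ} (hy : |y₁| ≤ |y₂|) :
    ‖f (y₂ * I)‖ ≤ ‖f (y₁ * I)‖ := by
  obtain ⟨μ, _, hμ, hf⟩ := hf.exists_apply_mul_I
  rw [hf, hf]
  exact norm_integral_stieltjesKernel_le hμ hy

lemma apply_mul_I_ne_zero (hf : MemT f) (y : ℝ) : f (y * I) ≠ 0 := by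
  obtain ⟨μ, _, -, hf⟩ := hf.exists_apply_mul_I
  rw [hf]
  exact integral_stieltjesKernel_ne_zero μ y

end MemT

theorem stmt18_general (f : ℂ → ℂ)
    (hquot : ∀ x ∈ Set.Ioo (0:ℝ) 1, MemT (fun z => f z / f ((x:ℂ) * z)))
    (w : ℝ → ℝ) (hw : ∀ y : ℝ, w y = ‖f (y * Complex.I)‖)
    (x τ y : ℝ) (hx : x ∈ Set.Ioo (0:ℝ) 1) (hτ : τ ∈ Set.Ioo (0:ℝ) 1) :
    Real.log (w y) - Real.log (w (x * y)) - Real.log (w (τ * y))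
      + Real.log (w (x * τ * y)) ≤ 0 := by
  set g : ℂ → ℂ := fun z => f z / f (x * z)
  have hg : MemT g := hquot x hx
  have hg_apply (y' : ℝ) : ‖g (y' * I)‖ = w y' / w (x * y') := by
    simp only [g, hw, norm_div, ofReal_mul, mul_assoc]
  have hw_pos (y' : ℝ) : 0 < w y' ∧ 0 < w (x * y') := by
    have hne := hg.apply_mul_I_ne_zero y'
    simp only [g, div_ne_zero_iff] at hne
    simp only [hw, ofReal_mul, mul_assoc, norm_pos_iff]
    exact hne
  have hle : w y / w (x * y) ≤ w (τ * y) / w (x * (τ * y)) := by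
    rw [← hg_apply, ← hg_apply]
    refine hg.norm_apply_mul_I_le ?_
    rw [abs_mul, abs_of_pos hτ.1]
    exact mul_le_of_le_one_left (abs_nonneg y) hτ.2.le
  obtain ⟨h₁, h₂⟩ := hw_pos y
  obtain ⟨h₃, h₄⟩ := hw_pos (τ * y)
  have hlog := Real.log_le_log (by positivity) hle
  rw [Real.log_div h₁.ne' h₂.ne', Real.log_div h₃.ne' h₄.ne'] at hlog
  rw [mul_assoc]
  linarith

theorem stmt18 (f : ℂ → ℂ) (hf : MemT f)
    (hquot : ∀ x ∈ Set.Ioo (0:ℝ) 1, MemT (fun z => f z / f ((x:ℂ) * z)))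
    (w : ℝ → ℝ) (hw : ∀ y : ℝ, w y = ‖f (y * Complex.I)‖)
    (x τ y : ℝ) (hx : x ∈ Set.Ioo (0:ℝ) 1) (hτ : τ ∈ Set.Ioo (0:ℝ) 1) (hy : 0 < y) :
    Real.log (w y) - Real.log (w (x * y)) - Real.log (w (τ * y))
      + Real.log (w (x * τ * y)) ≤ 0 :=
  stmt18_general f hquot w hw x τ y hx hτ
end
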